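/- Let R : X → ℝ with R(x) > 0 for all x ∈ X. Suppose the triple (P_F°, P_B°, Z°) with Z° > 0 satisfies trajectory balance for R, where P_B° is the uniform backward policy, and suppose (P_F, P_B, Z) with Z > 0 is any triple satisfying trajectory balance for R. Then H[P_F] ≤ H[P_F°]; that is, the Markovian flow determined by the uniform backward policy has maximal entropy among all Markovian flows whose terminating distribution matches the reward R. -/

import Mathlib

open scoped BigOperators Classical

/-- The GFlowNet state space `S = {0,1,⊘}^D`: functions from `Fin D` to `Option Bool`,
with `none` denoting the unspecified entry `⊘`. -/
abbrev GState (D : ℕ) := Fin D → Option Bool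

/-- The initial state `s₀`, with all entries `⊘`. -/
def initState (D : ℕ) : GState D := fun _ => none

/-- `s'` is a child of `s` (edge `s → s'` of the DAG `G`): `s'` is obtained from `s`
by changing exactly one `⊘`-entry of `s` to `0` or `1`. -/
def IsChild {D : ℕ} (s s' : GState D) : Prop :=
  ∃ (i : Fin D) (b : Bool), s i = none ∧ s' = Function.update s i (some b)

/-- Terminal states: no `⊘`-entry. -/
def IsTerminal {D : ℕ} (s : GState D) : Prop := ∀ i, s i ≠ none

/-- The embedding of `X = {0,1}^D` as the set of terminal states. -/
def ofX {D : ℕ} (x : Fin D → Bool) : GState D := fun i => some (x i)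

/-- `|s|`: the number of non-`⊘` entries of `s`. -/
def numAssigned {D : ℕ} (s : GState D) : ℕ :=
  (Finset.univ.filter fun i => s i ≠ none).card

/-- A complete trajectory `τ = (t₀ → t₁ → ⋯ → t_n)`, encoded as the list of its states:
it starts at `s₀`, each consecutive pair is an edge of `G`, and it ends at a terminal state. -/
def IsCompleteTraj {D : ℕ} (l : List (GState D)) : Prop :=
  l.head? = some (initState D) ∧ l.Chain' IsChild ∧
    ∃ s, l.getLast? = some s ∧ IsTerminal s

/-- The trajectory `l` ends at the terminal state corresponding to `x ∈ X`. -/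
def EndsAt {D : ℕ} (l : List (GState D)) (x : Fin D → Bool) : Prop :=
  l.getLast? = some (ofX x)

/-- `PF` is a forward policy: for every nonterminal `s`, `PF s ·` is a probability
distribution supported on the children of `s` (`PF s s'` is `P_F(s'|s)`). -/
def IsForwardPolicy {D : ℕ} (PF : GState D → GState D → ℝ) : Prop :=
  ∀ s : GState D, ¬ IsTerminal s →
    (∀ s', 0 ≤ PF s s') ∧ (∀ s', PF s s' ≠ 0 → IsChild s s') ∧
    (∑ s' : GState D, PF s s' = 1)

/-- `PB` is a backward policy: for every noninitial `s'`, `PB s' ·` is a probability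
distribution supported on the parents of `s'` (`PB s' s` is `P_B(s|s')`). -/
def IsBackwardPolicy {D : ℕ} (PB : GState D → GState D → ℝ) : Prop :=
  ∀ s' : GState D, s' ≠ initState D →
    (∀ s, 0 ≤ PB s' s) ∧ (∀ s, PB s' s ≠ 0 → IsChild s s') ∧
    (∑ s : GState D, PB s' s = 1)

/-- `P_F(τ) = ∏_{i<n} P_F(t_{i+1}|t_i)` along a trajectory. -/
def trajPF {D : ℕ} (PF : GState D → GState D → ℝ) (l : List (GState D)) : ℝ :=
  ((l.zip l.tail).map fun p => PF p.1 p.2).prod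

/-- `P_B(τ|x) = ∏_{i<n} P_B(t_i|t_{i+1})` along a trajectory. -/
def trajPB {D : ℕ} (PB : GState D → GState D → ℝ) (l : List (GState D)) : ℝ :=
  ((l.zip l.tail).map fun p => PB p.2 p.1).prod

/-- Trajectory balance for reward `R`: `Z·P_F(τ) = R(x)·P_B(τ|x)` for every complete
trajectory `τ` ending at `x`. -/
def TrajBalance {D : ℕ} (PF PB : GState D → GState D → ℝ) (Z : ℝ)
    (R : (Fin D → Bool) → ℝ) : Prop :=
  ∀ (l : List (GState D)) (x : Fin D → Bool),
    IsCompleteTraj l → EndsAt l x → Z * trajPF PF l = R x * trajPB PB l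

/-- The terminating probability `P_T(x)`: the sum of `P_F(τ)` over all complete
trajectories ending at `x`. -/
noncomputable def PT {D : ℕ} (PF : GState D → GState D → ℝ) (x : Fin D → Bool) : ℝ :=
  ∑ᶠ l ∈ {l : List (GState D) | IsCompleteTraj l ∧ EndsAt l x}, trajPF PF l

/-- A path in `G` from `s` to `t`, encoded as the list of its states. -/
def IsPath {D : ℕ} (l : List (GState D)) (s t : GState D) : Prop :=
  l.Chain' IsChild ∧ l.head? = some s ∧ l.getLast? = some t
/-- The state flow `F(s)`: sum of `F(τ) = Z·P_F(τ)` over complete trajectories through `s`. -/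
noncomputable def stateFlow {D : ℕ} (PF : GState D → GState D → ℝ) (Z : ℝ)
    (s : GState D) : ℝ :=
  ∑ᶠ l ∈ {l : List (GState D) | IsCompleteTraj l ∧ s ∈ l}, Z * trajPF PF l

/-- The edge flow `F(s→s')`: sum of `F(τ) = Z·P_F(τ)` over complete trajectories
containing the edge `s → s'`. -/
noncomputable def edgeFlow {D : ℕ} (PF : GState D → GState D → ℝ) (Z : ℝ)
    (s s' : GState D) : ℝ :=
  ∑ᶠ l ∈ {l : List (GState D) | IsCompleteTraj l ∧ (s, s') ∈ l.zip l.tail}, Z * trajPF PF l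

/-- The Shannon entropy `H[P_F(·|s)]` of the forward policy at `s` (natural log,
with `0·log 0 = 0`). -/
noncomputable def stepEntropyF {D : ℕ} (PF : GState D → GState D → ℝ) (s : GState D) : ℝ :=
  ∑ s' : GState D, Real.negMulLog (PF s s')

/-- The entropy of the flow determined by `P_F`:
`H[P_F] = Σ_τ P_F(τ) · Σ_{i<n} H[P_F(·|t_i)]`. -/
noncomputable def flowEntropy {D : ℕ} (PF : GState D → GState D → ℝ) : ℝ :=
  ∑ᶠ l ∈ {l : List (GState D) | IsCompleteTraj l},
    trajPF PF l * (l.dropLast.map (stepEntropyF PF)).sum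

/-- The uniform backward policy `P_B°(s|s') = 1/|s'|` for each parent `s` of `s'`. -/
noncomputable def uniformBackward (D : ℕ) : GState D → GState D → ℝ :=
  fun s' s => if IsChild s s' then 1 / (numAssigned s' : ℝ) else 0

/-!
Trajectory balance pins down the terminating distribution: summing `Z·P_F(τ) = R(x)·P_B(τ|x)`
over the trajectories `τ` ending at `x` gives `Z·P_T(x) = R(x)`, so `Z = Σ_x R(x)` and every
such flow puts the same mass `R(x)/Z` on the trajectories ending at `x`. By the chain rule for
entropy, `H[P_F]` is the Shannon entropy `Σ_τ -P_F(τ) log P_F(τ)` of the distribution on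
complete trajectories. Under the uniform backward policy `P_B°(τ|x) = 1/D!` for every `τ`, so
`P_F°` spreads the mass `R(x)/Z` evenly over the trajectories ending at `x`; the uniform
distribution maximizes entropy at fixed mass, by Jensen's inequality for `t ↦ -t log t`.
-/

open Finset

theorem sum_negMulLog_le_card_mul_negMulLog {ι : Type*} {s : Finset ι} {p : ι → ℝ} {c : ℝ}
    (hp : ∀ i ∈ s, 0 ≤ p i) (hsum : ∑ i ∈ s, p i = #s * c) :
    ∑ i ∈ s, Real.negMulLog (p i) ≤ #s * Real.negMulLog c := by
  rcases s.eq_empty_or_nonempty with rfl | hs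
  · simp
  have hn : (0 : ℝ) < #s := by exact_mod_cast hs.card_pos
  have hw : ∑ _i ∈ s, (#s : ℝ)⁻¹ = 1 := by
    rw [sum_const, nsmul_eq_mul, mul_inv_cancel₀ hn.ne']
  have hjensen := Real.concaveOn_negMulLog.le_map_sum (fun _ _ => inv_nonneg.2 hn.le) hw hp
  simp only [smul_eq_mul, ← mul_sum, hsum, inv_mul_cancel_left₀ hn.ne'] at hjensen
  calc ∑ i ∈ s, Real.negMulLog (p i)
      = #s * ((#s : ℝ)⁻¹ * ∑ i ∈ s, Real.negMulLog (p i)) :=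
        (mul_inv_cancel_left₀ hn.ne' _).symm
    _ ≤ #s * Real.negMulLog c := by gcongr

variable {D : ℕ}

theorem numAssigned_le (s : GState D) : numAssigned s ≤ D := by
  simpa [numAssigned] using card_filter_le univ fun i => s i ≠ none

theorem isTerminal_iff_numAssigned_eq {s : GState D} : IsTerminal s ↔ numAssigned s = D := by
  simpa [IsTerminal, numAssigned] using
    (card_filter_eq_iff (s := univ) (p := fun i => s i ≠ none)).symm

theorem eq_initState_iff_numAssigned_eq_zero {s : GState D} :
    s = initState D ↔ numAssigned s = 0 := by
  simp [numAssigned, funext_iff, initState]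

theorem isTerminal_iff_exists_eq_ofX {s : GState D} : IsTerminal s ↔ ∃ x, s = ofX x := by
  refine ⟨fun h => ⟨fun i => (s i).get (Option.isSome_iff_ne_none.2 (h i)), ?_⟩, ?_⟩
  · funext i; simp [ofX]
  · rintro ⟨x, rfl⟩ i; simp [ofX]

theorem ofX_injective : Function.Injective (ofX (D := D)) :=
  fun _ _ h => funext fun i => Option.some.inj (congrFun h i)

theorem IsChild.numAssigned_eq {s s' : GState D} (h : IsChild s s') :
    numAssigned s' = numAssigned s + 1 := by
  obtain ⟨i, b, hi, rfl⟩ := h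
  have : univ.filter (fun j => Function.update s i (some b) j ≠ none)
      = insert i (univ.filter fun j => s j ≠ none) := by
    ext j
    by_cases hj : j = i
    · subst hj; simp
    · simp [hj]
  rw [numAssigned, numAssigned, this, card_insert_of_notMem (by simp [hi])]

theorem IsChild.not_isTerminal {s s' : GState D} (h : IsChild s s') : ¬ IsTerminal s := by
  obtain ⟨i, _, hi, _⟩ := h
  exact fun ht => ht i hi

theorem isChild_iff_eq_update_none {p s : GState D} :
    IsChild p s ↔ ∃ i, s i ≠ none ∧ p = Function.update s i none := by
  constructor
  · rintro ⟨i, b, hi, rfl⟩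
    exact ⟨i, by simp, by rw [Function.update_idem, Function.update_eq_self_iff.2 hi.symm]⟩
  · rintro ⟨i, hi, rfl⟩
    obtain ⟨b, hb⟩ := Option.ne_none_iff_exists'.1 hi
    exact ⟨i, b, by simp, by rw [Function.update_idem, ← hb, Function.update_eq_self]⟩

noncomputable def children (s : GState D) : Finset (GState D) := univ.filter (IsChild s)

noncomputable def parents (s : GState D) : Finset (GState D) := univ.filter (IsChild · s)

@[simp] theorem mem_children {s s' : GState D} : s' ∈ children s ↔ IsChild s s' := by
  simp [children]

@[simp] theorem mem_parents {s p : GState D} : p ∈ parents s ↔ IsChild p s := by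
  simp [parents]

theorem card_parents (s : GState D) : #(parents s) = numAssigned s := by
  have : parents s = (univ.filter fun i => s i ≠ none).image (Function.update s · none) := by
    ext p; simp [isChild_iff_eq_update_none, eq_comm]
  rw [this, card_image_of_injOn, numAssigned]
  intro i hi j _ hij
  by_contra hne
  have := congrFun hij i
  simp only [Function.update_self, Function.update_of_ne hne] at this
  exact (mem_filter.1 hi).2 this.symm

@[elab_as_elim]
theorem GState.induction_on_children {P : GState D → Prop} (s : GState D)
    (terminal : ∀ s, IsTerminal s → P s)
    (step : ∀ s, ¬ IsTerminal s → (∀ s', IsChild s s' → P s') → P s) : P s := by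
  suffices ∀ k s, numAssigned s + k = D → P s from
    this _ s (Nat.add_sub_cancel' (numAssigned_le s))
  intro k
  induction k with
  | zero => exact fun s hs => terminal s (isTerminal_iff_numAssigned_eq.2 hs)
  | succ k ih =>
    refine fun s hs => step s (by rw [isTerminal_iff_numAssigned_eq]; omega) fun s' h => ?_
    exact ih s' (by rw [h.numAssigned_eq]; omega)

@[elab_as_elim]
theorem GState.induction_on_parents {P : GState D → Prop} (s : GState D)
    (init : P (initState D))
    (step : ∀ s, s ≠ initState D → (∀ p, IsChild p s → P p) → P s) : P s := by
  suffices ∀ k s, numAssigned s = k → P s from this _ s rfl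
  intro k
  induction k with
  | zero => exact fun s hs => eq_initState_iff_numAssigned_eq_zero.2 hs ▸ init
  | succ k ih =>
    refine fun s hs => step s (by rw [Ne, eq_initState_iff_numAssigned_eq_zero]; omega) ?_
    exact fun p h => ih p (by rw [h.numAssigned_eq] at hs; omega)

theorem isPath_iff {l : List (GState D)} {s t : GState D} :
    IsPath l s t ↔ l.IsChain IsChild ∧ l.head? = some s ∧ l.getLast? = some t :=
  Iff.rfl

theorem isPath_singleton {a s t : GState D} : IsPath [a] s t ↔ a = s ∧ a = t := by
  simp [isPath_iff]

theorem isPath_cons_cons {a b s t : GState D} {l : List (GState D)} :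
    IsPath (a :: b :: l) s t ↔ a = s ∧ IsChild a b ∧ IsPath (b :: l) b t := by
  simp only [isPath_iff, List.isChain_cons_cons, List.head?_cons, Option.some.injEq,
    List.getLast?_cons_cons]
  tauto

theorem IsPath.numAssigned_add_length : ∀ {l : List (GState D)} {s t : GState D},
    IsPath l s t → numAssigned t + 1 = numAssigned s + l.length
  | [], _, _, h => by simp [IsPath] at h
  | [_], _, _, h => by obtain ⟨rfl, rfl⟩ := isPath_singleton.1 h; rfl
  | _ :: _ :: _, _, _, h => by
    obtain ⟨rfl, hab, hl⟩ := isPath_cons_cons.1 h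
    have := hl.numAssigned_add_length
    rw [hab.numAssigned_eq] at this
    simp only [List.length_cons] at this ⊢
    omega

theorem isPath_self_iff {l : List (GState D)} {s : GState D} : IsPath l s s ↔ l = [s] := by
  refine ⟨fun h => ?_, fun h => h ▸ isPath_singleton.2 ⟨rfl, rfl⟩⟩
  have hlen := h.numAssigned_add_length
  obtain ⟨a, rfl⟩ := (List.length_eq_one_iff (l := l)).1 (by omega)
  rw [(isPath_singleton.1 h).1]

theorem IsPath.cons {l : List (GState D)} {s s' t : GState D} (h : IsChild s s')
    (hl : IsPath l s' t) : IsPath (s :: l) s t := by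
  obtain ⟨l', rfl⟩ := List.head?_eq_some_iff.1 hl.2.1
  exact isPath_cons_cons.2 ⟨rfl, h, hl⟩

theorem IsPath.exists_cons_of_ne {l : List (GState D)} {s t : GState D} (hl : IsPath l s t)
    (h : s ≠ t) : ∃ s' l', l = s :: l' ∧ IsChild s s' ∧ IsPath l' s' t := by
  obtain ⟨l', rfl⟩ := List.head?_eq_some_iff.1 hl.2.1
  match l', hl with
  | [], hl => exact absurd (isPath_singleton.1 hl).2 h
  | b :: l'', hl => exact ⟨b, _, rfl, (isPath_cons_cons.1 hl).2⟩

theorem IsPath.append_singleton {l : List (GState D)} {s p t : GState D} (hl : IsPath l s p)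
    (h : IsChild p t) : IsPath (l ++ [t]) s t := by
  obtain ⟨hc, hh, hlast⟩ := hl
  have hne : l ≠ [] := by rintro rfl; simp at hh
  refine ⟨List.isChain_append.2 ⟨hc, List.isChain_singleton t, ?_⟩, ?_,
    List.getLast?_concat⟩
  · simpa [hlast] using h
  · rw [List.head?_append_of_ne_nil _ hne, hh]

theorem IsPath.exists_append_singleton_of_ne {l : List (GState D)} {s t : GState D}
    (hl : IsPath l s t) (h : s ≠ t) :
    ∃ p l', l = l' ++ [t] ∧ IsChild p t ∧ IsPath l' s p := by
  obtain ⟨hc, hh, hlast⟩ := hl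
  rcases List.eq_nil_or_concat' l with rfl | ⟨L, b, rfl⟩
  · simp at hh
  obtain rfl : b = t := by simpa using hlast
  rcases List.eq_nil_or_concat' L with rfl | ⟨L', p, rfl⟩
  · exact absurd (by simpa using hh.symm) h
  have hc' := List.isChain_append.1 hc
  refine ⟨p, L' ++ [p], rfl, by simpa using hc'.2.2, hc'.1, ?_, List.getLast?_concat⟩
  rwa [List.head?_append_of_ne_nil _ (by simp)] at hh

theorem isPath_finite (s t : GState D) : {l | IsPath l s t}.Finite :=
  (List.finite_length_le _ (D + 1)).subset fun l (hl : IsPath l s t) => by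
    have := hl.numAssigned_add_length
    have := numAssigned_le t
    show l.length ≤ D + 1
    omega

noncomputable def paths (s t : GState D) : Finset (List (GState D)) :=
  (isPath_finite s t).toFinset

@[simp] theorem mem_paths {l : List (GState D)} {s t : GState D} :
    l ∈ paths s t ↔ IsPath l s t :=
  Set.Finite.mem_toFinset _

theorem paths_self (s : GState D) : paths s s = {[s]} := by
  ext; simp [isPath_self_iff]

theorem sum_paths_eq_sum_children {M : Type*} [AddCommMonoid M] {s t : GState D} (h : s ≠ t)
    (f : List (GState D) → M) :
    ∑ l ∈ paths s t, f l = ∑ s' ∈ children s, ∑ l ∈ paths s' t, f (s :: l) := by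
  rw [sum_sigma']
  refine (sum_bij (fun q _ => s :: q.2) ?_ ?_ ?_ fun _ _ => rfl).symm
  · rintro ⟨s', l⟩ hq
    simp only [mem_sigma, mem_children, mem_paths] at hq ⊢
    exact hq.2.cons hq.1
  · rintro ⟨s₁, l₁⟩ h₁ ⟨s₂, l₂⟩ h₂ heq
    simp only [mem_sigma, mem_paths, List.cons.injEq, true_and] at h₁ h₂ heq
    subst heq
    obtain rfl : s₁ = s₂ := Option.some.inj (h₁.2.2.1.symm.trans h₂.2.2.1)
    rfl
  · intro l hl
    obtain ⟨s', l', rfl, hs', hl'⟩ := (mem_paths.1 hl).exists_cons_of_ne h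
    exact ⟨⟨s', l'⟩, by simp [hs', hl'], rfl⟩

theorem sum_paths_eq_sum_parents {M : Type*} [AddCommMonoid M] {s t : GState D} (h : s ≠ t)
    (f : List (GState D) → M) :
    ∑ l ∈ paths s t, f l = ∑ p ∈ parents t, ∑ l ∈ paths s p, f (l ++ [t]) := by
  rw [sum_sigma']
  refine (sum_bij (fun q _ => q.2 ++ [t]) ?_ ?_ ?_ fun _ _ => rfl).symm
  · rintro ⟨p, l⟩ hq
    simp only [mem_sigma, mem_parents, mem_paths] at hq ⊢
    exact hq.2.append_singleton hq.1
  · rintro ⟨p₁, l₁⟩ h₁ ⟨p₂, l₂⟩ h₂ heq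
    simp only [mem_sigma, mem_paths, List.append_left_inj] at h₁ h₂ heq
    subst heq
    obtain rfl : p₁ = p₂ := Option.some.inj (h₁.2.2.2.symm.trans h₂.2.2.2)
    rfl
  · intro l hl
    obtain ⟨p, l', rfl, hp, hl'⟩ := (mem_paths.1 hl).exists_append_singleton_of_ne h
    exact ⟨⟨p, l'⟩, by simp [hp, hl'], rfl⟩

noncomputable def pathsFrom (s : GState D) : Finset (List (GState D)) :=
  univ.biUnion fun x => paths s (ofX x)

theorem head?_of_mem_pathsFrom {l : List (GState D)} {s : GState D} (hl : l ∈ pathsFrom s) :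
    l.head? = some s := by
  obtain ⟨x, -, hx⟩ := mem_biUnion.1 hl
  exact (mem_paths.1 hx).2.1

theorem sum_pathsFrom {M : Type*} [AddCommMonoid M] (s : GState D) (f : List (GState D) → M) :
    ∑ l ∈ pathsFrom s, f l = ∑ x, ∑ l ∈ paths s (ofX x), f l := by
  refine sum_biUnion fun x _ y _ hxy => disjoint_left.2 fun l hx hy => hxy (ofX_injective ?_)
  exact Option.some.inj ((mem_paths.1 hx).2.2.symm.trans (mem_paths.1 hy).2.2)

theorem pathsFrom_of_isTerminal {s : GState D} (hs : IsTerminal s) : pathsFrom s = {[s]} := by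
  ext l
  simp only [pathsFrom, mem_biUnion, mem_univ, true_and, mem_paths, mem_singleton]
  constructor
  · rintro ⟨x, hl⟩
    by_cases hx : s = ofX x
    · exact isPath_self_iff.1 (hx ▸ hl)
    · obtain ⟨_, _, _, hs', _⟩ := hl.exists_cons_of_ne hx
      exact absurd hs hs'.not_isTerminal
  · rintro rfl
    obtain ⟨x, rfl⟩ := isTerminal_iff_exists_eq_ofX.1 hs
    exact ⟨x, isPath_self_iff.2 rfl⟩

theorem sum_pathsFrom_of_not_isTerminal {M : Type*} [AddCommMonoid M] {s : GState D}
    (hs : ¬ IsTerminal s) (f : List (GState D) → M) :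
    ∑ l ∈ pathsFrom s, f l = ∑ s' ∈ children s, ∑ l ∈ pathsFrom s', f (s :: l) := by
  have hne (x : Fin D → Bool) : s ≠ ofX x :=
    fun h => hs (isTerminal_iff_exists_eq_ofX.2 ⟨x, h⟩)
  simp only [sum_pathsFrom, sum_paths_eq_sum_children (hne _)]
  exact sum_comm

theorem isCompleteTraj_iff_mem_pathsFrom {l : List (GState D)} :
    IsCompleteTraj l ↔ l ∈ pathsFrom (initState D) := by
  simp only [IsCompleteTraj, pathsFrom, mem_biUnion, mem_univ, true_and, mem_paths, IsPath,
    isTerminal_iff_exists_eq_ofX]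
  constructor
  · rintro ⟨hh, hc, _, hl, x, rfl⟩; exact ⟨x, hc, hh, hl⟩
  · rintro ⟨x, hc, hh, hl⟩; exact ⟨hh, hc, _, hl, x, rfl⟩

theorem isCompleteTraj_and_endsAt_iff {l : List (GState D)} {x : Fin D → Bool} :
    IsCompleteTraj l ∧ EndsAt l x ↔ l ∈ paths (initState D) (ofX x) := by
  rw [isCompleteTraj_iff_mem_pathsFrom, pathsFrom, mem_biUnion]
  simp only [mem_univ, true_and, mem_paths, EndsAt]
  constructor
  · rintro ⟨⟨y, hy⟩, hx⟩
    obtain rfl := ofX_injective (Option.some.inj (hy.2.2.symm.trans hx))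
    exact hy
  · exact fun h => ⟨⟨x, h⟩, h.2.2⟩

section Policies

variable {PF PB : GState D → GState D → ℝ}

theorem sum_children_apply (hPF : IsForwardPolicy PF) {s : GState D} (hs : ¬ IsTerminal s)
    {f : ℝ → ℝ} (hf : f 0 = 0) : ∑ s' ∈ children s, f (PF s s') = ∑ s', f (PF s s') :=
  sum_filter_of_ne fun s' _ h => (hPF s hs).2.1 s' fun h0 => h (by rw [h0, hf])

theorem sum_children_eq_one (hPF : IsForwardPolicy PF) {s : GState D} (hs : ¬ IsTerminal s) :
    ∑ s' ∈ children s, PF s s' = 1 :=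
  (sum_children_apply hPF hs (f := id) rfl).trans (hPF s hs).2.2

theorem stepEntropyF_eq_sum_children (hPF : IsForwardPolicy PF) {s : GState D}
    (hs : ¬ IsTerminal s) : stepEntropyF PF s = ∑ s' ∈ children s, Real.negMulLog (PF s s') :=
  (sum_children_apply hPF hs Real.negMulLog_zero).symm

theorem sum_parents_eq_one (hPB : IsBackwardPolicy PB) {s : GState D} (hs : s ≠ initState D) :
    ∑ p ∈ parents s, PB s p = 1 :=
  (sum_filter_of_ne fun p _ h => (hPB s hs).2.1 p h).trans (hPB s hs).2.2

theorem uniformBackward_isBackwardPolicy : IsBackwardPolicy (uniformBackward D) := by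
  intro s hs
  have hpos : (numAssigned s : ℝ) ≠ 0 := by
    exact_mod_cast mt eq_initState_iff_numAssigned_eq_zero.2 hs
  refine ⟨fun p => ?_, fun p h => by_contra fun hp => h (if_neg hp), ?_⟩
  · unfold uniformBackward; split_ifs <;> positivity
  · simp only [uniformBackward, ← sum_filter, sum_const, nsmul_eq_mul]
    change ((#(parents s) : ℕ) : ℝ) * _ = 1
    rw [card_parents]
    exact mul_one_div_cancel hpos

theorem trajPF_cons_cons (a b : GState D) (l : List (GState D)) :
    trajPF PF (a :: b :: l) = PF a b * trajPF PF (b :: l) := by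
  simp [trajPF]

theorem trajPF_cons {a b : GState D} {l : List (GState D)} (hl : l.head? = some b) :
    trajPF PF (a :: l) = PF a b * trajPF PF l := by
  obtain ⟨l', rfl⟩ := List.head?_eq_some_iff.1 hl
  exact trajPF_cons_cons a b l'

theorem trajPF_nonneg (hPF : IsForwardPolicy PF) :
    ∀ {l : List (GState D)} {s t : GState D}, IsPath l s t → 0 ≤ trajPF PF l
  | [], _, _, _ | [_], _, _, _ => by simp [trajPF]
  | a :: b :: _, _, _, h => by
    obtain ⟨-, hab, hl⟩ := isPath_cons_cons.1 h
    rw [trajPF_cons_cons]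
    exact mul_nonneg ((hPF a hab.not_isTerminal).1 b) (trajPF_nonneg hPF hl)

theorem trajPB_append_singleton :
    ∀ {l : List (GState D)} {p : GState D}, l.getLast? = some p → ∀ t,
      trajPB PB (l ++ [t]) = trajPB PB l * PB t p
  | [], _, h, _ => by simp at h
  | [a], _, h, _ => by simp only [List.getLast?_singleton, Option.some.injEq] at h; simp [trajPB, h]
  | a :: b :: l, _, h, t => by
    rw [List.getLast?_cons_cons] at h
    have := trajPB_append_singleton h t
    simp only [trajPB, List.cons_append, List.tail_cons, List.zip_cons_cons, List.map_cons,
      List.prod_cons] at this ⊢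
    rw [this, mul_assoc]

theorem sum_trajPF_pathsFrom (hPF : IsForwardPolicy PF) (s : GState D) :
    ∑ l ∈ pathsFrom s, trajPF PF l = 1 := by
  induction s using GState.induction_on_children with
  | terminal s hs => simp [pathsFrom_of_isTerminal hs, trajPF]
  | step s hs ih =>
    rw [sum_pathsFrom_of_not_isTerminal hs, ← sum_children_eq_one hPF hs]
    refine sum_congr rfl fun s' hs' => ?_
    calc ∑ l ∈ pathsFrom s', trajPF PF (s :: l)
        = ∑ l ∈ pathsFrom s', PF s s' * trajPF PF l :=
          sum_congr rfl fun l hl => trajPF_cons (head?_of_mem_pathsFrom hl)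
      _ = PF s s' := by rw [← mul_sum, ih s' (mem_children.1 hs'), mul_one]

theorem sum_trajPB_paths (hPB : IsBackwardPolicy PB) (s : GState D) :
    ∑ l ∈ paths (initState D) s, trajPB PB l = 1 := by
  induction s using GState.induction_on_parents with
  | init => simp [paths_self, trajPB]
  | step s hs ih =>
    rw [sum_paths_eq_sum_parents (Ne.symm hs), ← sum_parents_eq_one hPB hs]
    refine sum_congr rfl fun p hp => ?_
    calc ∑ l ∈ paths (initState D) p, trajPB PB (l ++ [s])
        = ∑ l ∈ paths (initState D) p, trajPB PB l * PB s p :=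
          sum_congr rfl fun l hl => trajPB_append_singleton (mem_paths.1 hl).2.2 s
      _ = PB s p := by rw [← sum_mul, ih p (mem_parents.1 hp), one_mul]

theorem trajPB_uniformBackward {l : List (GState D)} {s : GState D}
    (hl : IsPath l (initState D) s) :
    trajPB (uniformBackward D) l = ((numAssigned s).factorial : ℝ)⁻¹ := by
  induction s using GState.induction_on_parents generalizing l with
  | init =>
    rw [isPath_self_iff.1 hl, eq_initState_iff_numAssigned_eq_zero.1 rfl]
    simp [trajPB]
  | step s hs ih =>
    obtain ⟨p, l', rfl, hp, hl'⟩ := hl.exists_append_singleton_of_ne (Ne.symm hs)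
    rw [trajPB_append_singleton hl'.2.2, ih p hp hl', uniformBackward, if_pos hp,
      hp.numAssigned_eq, Nat.factorial_succ, Nat.cast_mul, mul_inv, one_div]
    exact mul_comm _ _

theorem sum_trajPF_mul_sum_stepEntropyF (hPF : IsForwardPolicy PF) (s : GState D) :
    ∑ l ∈ pathsFrom s, trajPF PF l * (l.dropLast.map (stepEntropyF PF)).sum
      = ∑ l ∈ pathsFrom s, Real.negMulLog (trajPF PF l) := by
  induction s using GState.induction_on_children with
  | terminal s hs => simp [pathsFrom_of_isTerminal hs, trajPF]
  | step s hs ih =>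
    set E := fun s' => ∑ l ∈ pathsFrom s', Real.negMulLog (trajPF PF l)
    have hlhs : ∀ s' ∈ children s,
        ∑ l ∈ pathsFrom s', trajPF PF (s :: l) * ((s :: l).dropLast.map (stepEntropyF PF)).sum
          = PF s s' * stepEntropyF PF s + PF s s' * E s' := by
      intro s' hs'
      calc _ = ∑ l ∈ pathsFrom s', PF s s' * (stepEntropyF PF s * trajPF PF l
                + trajPF PF l * (l.dropLast.map (stepEntropyF PF)).sum) := by
            refine sum_congr rfl fun l hl => ?_
            have hne : l ≠ [] := by rintro rfl; simpa using head?_of_mem_pathsFrom hl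
            rw [trajPF_cons (head?_of_mem_pathsFrom hl), List.dropLast_cons_of_ne_nil hne,
              List.map_cons, List.sum_cons]
            ring
        _ = _ := by
            rw [← mul_sum, sum_add_distrib, ← mul_sum, sum_trajPF_pathsFrom hPF,
              ih s' (mem_children.1 hs'), mul_one, mul_add]
    have hrhs : ∀ s' ∈ children s,
        ∑ l ∈ pathsFrom s', Real.negMulLog (trajPF PF (s :: l))
          = Real.negMulLog (PF s s') + PF s s' * E s' := by
      intro s' hs'
      calc _ = ∑ l ∈ pathsFrom s', (trajPF PF l * Real.negMulLog (PF s s')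
                + PF s s' * Real.negMulLog (trajPF PF l)) :=
            sum_congr rfl fun l hl => by
              rw [trajPF_cons (head?_of_mem_pathsFrom hl), Real.negMulLog_mul]
        _ = _ := by
            rw [sum_add_distrib, ← sum_mul, ← mul_sum, sum_trajPF_pathsFrom hPF, one_mul]
    rw [sum_pathsFrom_of_not_isTerminal hs, sum_pathsFrom_of_not_isTerminal hs,
      sum_congr rfl hlhs, sum_congr rfl hrhs, sum_add_distrib, sum_add_distrib, ← sum_mul,
      sum_children_eq_one hPF hs, one_mul, stepEntropyF_eq_sum_children hPF hs]

theorem flowEntropy_eq_sum_negMulLog (hPF : IsForwardPolicy PF) :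
    flowEntropy PF
      = ∑ x, ∑ l ∈ paths (initState D) (ofX x), Real.negMulLog (trajPF PF l) := by
  have : {l : List (GState D) | IsCompleteTraj l} = ↑(pathsFrom (initState D)) := by
    ext; simp [isCompleteTraj_iff_mem_pathsFrom]
  rw [flowEntropy, this, finsum_mem_coe_finset, sum_trajPF_mul_sum_stepEntropyF hPF,
    sum_pathsFrom]

theorem PT_eq_sum (PF : GState D → GState D → ℝ) (x : Fin D → Bool) :
    PT PF x = ∑ l ∈ paths (initState D) (ofX x), trajPF PF l := by
  have : {l : List (GState D) | IsCompleteTraj l ∧ EndsAt l x}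
      = ↑(paths (initState D) (ofX x)) := by
    ext; simp [isCompleteTraj_and_endsAt_iff]
  rw [PT, this, finsum_mem_coe_finset]

theorem sum_PT (hPF : IsForwardPolicy PF) : ∑ x, PT PF x = 1 := by
  rw [sum_congr rfl fun x _ => PT_eq_sum PF x, ← sum_pathsFrom, sum_trajPF_pathsFrom hPF]

namespace TrajBalance

variable {Z : ℝ} {R : (Fin D → Bool) → ℝ}

theorem of_mem_paths (hTB : TrajBalance PF PB Z R) {l : List (GState D)} {x : Fin D → Bool}
    (hl : l ∈ paths (initState D) (ofX x)) : Z * trajPF PF l = R x * trajPB PB l :=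
  have h := isCompleteTraj_and_endsAt_iff.2 hl
  hTB l x h.1 h.2

theorem mul_PT (hTB : TrajBalance PF PB Z R) (hPB : IsBackwardPolicy PB) (x : Fin D → Bool) :
    Z * PT PF x = R x := by
  rw [PT_eq_sum, mul_sum, ← mul_one (R x), ← sum_trajPB_paths hPB (ofX x), mul_sum]
  exact sum_congr rfl fun l hl => hTB.of_mem_paths hl

theorem eq_sum_reward (hTB : TrajBalance PF PB Z R) (hPF : IsForwardPolicy PF)
    (hPB : IsBackwardPolicy PB) : Z = ∑ x, R x := by
  rw [← mul_one Z, ← sum_PT hPF, mul_sum]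
  exact sum_congr rfl fun x _ => hTB.mul_PT hPB x

end TrajBalance

end Policies

theorem statement5_general {D : ℕ}
    (R : (Fin D → Bool) → ℝ)
    (PF₀ PF PB : GState D → GState D → ℝ) (Z₀ Z : ℝ)
    (hZ : 0 < Z)
    (hPF₀ : IsForwardPolicy PF₀)
    (hTB₀ : TrajBalance PF₀ (uniformBackward D) Z₀ R)
    (hPF : IsForwardPolicy PF) (hPB : IsBackwardPolicy PB)
    (hTB : TrajBalance PF PB Z R) :
    flowEntropy PF ≤ flowEntropy PF₀ := by
  obtain rfl : Z₀ = Z := by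
    rw [hTB₀.eq_sum_reward hPF₀ uniformBackward_isBackwardPolicy, hTB.eq_sum_reward hPF hPB]
  rw [flowEntropy_eq_sum_negMulLog hPF, flowEntropy_eq_sum_negMulLog hPF₀]
  refine sum_le_sum fun x _ => ?_
  set c := R x * ((numAssigned (ofX x)).factorial : ℝ)⁻¹ / Z₀
  have hconst : ∀ l ∈ paths (initState D) (ofX x), trajPF PF₀ l = c := fun l hl => by
    rw [eq_div_iff hZ.ne', mul_comm, hTB₀.of_mem_paths hl,
      trajPB_uniformBackward (mem_paths.1 hl)]
  have hPT : PT PF x = PT PF₀ x := mul_left_cancel₀ hZ.ne'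
    ((hTB.mul_PT hPB x).trans (hTB₀.mul_PT uniformBackward_isBackwardPolicy x).symm)
  have hmass : ∑ l ∈ paths (initState D) (ofX x), trajPF PF l
      = #(paths (initState D) (ofX x)) * c := by
    rw [← PT_eq_sum, hPT, PT_eq_sum, sum_congr rfl hconst, sum_const, nsmul_eq_mul]
  rw [sum_congr rfl fun l hl => congrArg Real.negMulLog (hconst l hl), sum_const, nsmul_eq_mul]
  exact sum_negMulLog_le_card_mul_negMulLog (fun l hl => trajPF_nonneg hPF (mem_paths.1 hl)) hmass

/-- Let `R` be positive on `X`. If `(P_F°, P_B°, Z°)` satisfies trajectory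
balance for `R` with the uniform backward policy `P_B°`, and `(P_F, P_B, Z)` is any triple
satisfying trajectory balance for `R`, then `H[P_F] ≤ H[P_F°]`: the flow determined by the
uniform backward policy has maximal entropy among all Markovian flows matching the reward. -/
theorem statement5 {D : ℕ} (hD : 1 ≤ D)
    (R : (Fin D → Bool) → ℝ) (hR : ∀ x, 0 < R x)
    (PF₀ PF PB : GState D → GState D → ℝ) (Z₀ Z : ℝ)
    (hZ₀ : 0 < Z₀) (hZ : 0 < Z)
    (hPF₀ : IsForwardPolicy PF₀)
    (hTB₀ : TrajBalance PF₀ (uniformBackward D) Z₀ R)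
    (hPF : IsForwardPolicy PF) (hPB : IsBackwardPolicy PB)
    (hTB : TrajBalance PF PB Z R) :
    flowEntropy PF ≤ flowEntropy PF₀ :=
  statement5_general R PF₀ PF PB Z₀ Z hZ hPF₀ hTB₀ hPF hPB hTB
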